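/- Let H be a real Hilbert space with inner product a(·,·) inducing the norm ‖·‖, let W ⊆ H be a closed subspace, and let b : H × H → ℝ be a map, linear in the second argument, satisfying the monotonicity (b(u;u-v) - b(v;u-v)) ≥ 0 for all u,v ∈ H and the local Lipschitz property |b(u;w) - b(v;w)| ≤ M‖u - v‖·‖w‖ for all u, v in a ball B_ρ containing both the exact and discrete solutions. Suppose u ∈ B_ρ solves a(u,v) + b(u;v) = ℓ(v) for all v ∈ H and U ∈ W ∩ B_ρ solves a(U,v) + b(U;v) = ℓ(v) for all v ∈ W, where ℓ is a bounded linear functional. Then ‖u - U‖ ≤ (1 + M) · inf_{w ∈ W} ‖u - w‖. -/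
import Mathlib


open scoped RealInnerProductSpace

/-- Abstract quasi-optimality (Céa-type) lemma for monotone semilinear problems. -/
theorem quasi_optimality {H : Type*} [NormedAddCommGroup H] [InnerProductSpace ℝ H]
    (W : Submodule ℝ H) (hW : IsClosed (W : Set H))
    (b : H → H → ℝ) (hblin : ∀ u : H, IsLinearMap ℝ (b u))
    (hmono : ∀ u v : H, 0 ≤ b u (u - v) - b v (u - v))
    (ρ M : ℝ) (hρ : 0 < ρ) (hM : 0 ≤ M)
    (hlip : ∀ u ∈ Metric.closedBall (0 : H) ρ, ∀ v ∈ Metric.closedBall (0 : H) ρ,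
      ∀ w : H, |b u w - b v w| ≤ M * ‖u - v‖ * ‖w‖)
    (ℓ : H →L[ℝ] ℝ)
    (u : H) (hu : u ∈ Metric.closedBall (0 : H) ρ)
    (hueq : ∀ v : H, ⟪u, v⟫ + b u v = ℓ v)
    (U : H) (hUW : U ∈ W) (hUball : U ∈ Metric.closedBall (0 : H) ρ)
    (hUeq : ∀ v ∈ W, ⟪U, v⟫ + b U v = ℓ v) :
    ‖u - U‖ ≤ (1 + M) * ⨅ w : W, ‖u - (w : H)‖ := by
  have h1M : (0:ℝ) < 1 + M := by linarith
  have key : ∀ w : H, w ∈ W → ‖u - U‖ ≤ (1 + M) * ‖u - w‖ := by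
    intro w hw
    have hwU : w - U ∈ W := W.sub_mem hw hUW
    have hin : ⟪u - U, w - U⟫ = b U (w - U) - b u (w - U) := by
      have h1 := hueq (w - U)
      have h2 := hUeq (w - U) hwU
      rw [inner_sub_left]
      linarith
    have hsplit : ∀ x : H, b x (w - U) = b x (w - u) + b x (u - U) := by
      intro x
      have h : w - U = (w - u) + (u - U) := by abel
      rw [h, (hblin x).map_add]
    have hmonoUu := hmono U u
    have hneg : ∀ x : H, b x (u - U) = - b x (U - u) := by
      intro x
      have h : u - U = -(U - u) := by abel
      rw [h, (hblin x).map_neg]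
    have hlipwu := hlip U hUball u hu (w - u)
    have hsq : ‖u - U‖^2 ≤ ⟪u - U, u - w⟫ + M * ‖u - U‖ * ‖u - w‖ := by
      have h1 : ‖u - U‖^2 = ⟪u - U, u - w⟫ + ⟪u - U, w - U⟫ := by
        rw [← inner_add_right]
        have h : (u - w) + (w - U) = u - U := by abel
        rw [h, real_inner_self_eq_norm_sq]
      rw [h1]
      have h2 : ⟪u - U, w - U⟫ ≤ M * ‖u - U‖ * ‖u - w‖ := by
        rw [hin, hsplit U, hsplit u]
        have h3 : b U (u - U) - b u (u - U) ≤ 0 := by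
          rw [hneg U, hneg u]; linarith
        have h4 : b U (w - u) - b u (w - u) ≤ M * ‖U - u‖ * ‖w - u‖ :=
          le_trans (le_abs_self _) hlipwu
        have e1 : ‖U - u‖ = ‖u - U‖ := norm_sub_rev _ _
        have e2 : ‖w - u‖ = ‖u - w‖ := norm_sub_rev _ _
        rw [e1, e2] at h4
        linarith
      linarith
    rcases eq_or_lt_of_le (norm_nonneg (u - U)) with h0 | h0
    · rw [← h0]; positivity
    · have hcs : ⟪u - U, u - w⟫ ≤ ‖u - U‖ * ‖u - w‖ := real_inner_le_norm _ _
      nlinarith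
  have hne : Nonempty W := ⟨⟨U, hUW⟩⟩
  have hinf : ‖u - U‖ / (1 + M) ≤ ⨅ w : W, ‖u - (w:H)‖ := by
    apply le_ciInf
    intro w
    rw [div_le_iff₀ h1M, mul_comm]
    exact key w w.2
  rw [div_le_iff₀ h1M] at hinf
  linarith [hinf]
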